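/- Let 1 ≤ k < n, κ_1 < … < κ_n real, c_1, …, c_n real, and let A be a totally nonnegative real k×n matrix of rank k. With f_i(x) = Σ_{j=1}^n A_{ij} e^{κ_j x + c_j}, for every x ∈ ℝ there exist unique real numbers w_1(x), …, w_k(x) such that f_i^{(k)}(x) = Σ_{s=1}^k w_s(x) f_i^{(k−s)}(x) for all i = 1, …, k. -/

import Mathlib

open scoped BigOperators Matrix

/-- The `k × k` maximal minor of a real `k × n` matrix `A` on the set of columns `I`
(defined to be `0` when `I` does not have exactly `k` elements). -/
noncomputable def maxMinor {k n : ℕ} (A : Matrix (Fin k) (Fin n) ℝ)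
    (I : Finset (Fin n)) : ℝ :=
  if h : I.card = k then
    (A.submatrix id fun j => ((I.orderIsoOfFin h) j : Fin n)).det
  else 0

/-!
The linear system for `w` has as coefficient matrix the Wronskian matrix `(f_i^{(l)}(x))` with
its columns reversed, so it suffices that `τ(x) > 0`. Since
`f_i^{(l)}(x) = Σ_j A_ij κ_j^l e^{κ_j x + c_j}`, the Wronskian matrix is `A * E` with
`E_jl = e^{κ_j x + c_j} κ_j^l`, and Cauchy–Binet gives
`τ(x) = Σ_I Δ_I(A) e^{Σ_{j ∈ I} (κ_j x + c_j)} Π_{i < j in I} (κ_j - κ_i)`.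
Every term is nonnegative by total nonnegativity and the ordering of the phases, and some term is
positive because a matrix of rank `k` has a nonzero maximal minor.
-/

open Finset Function Matrix

theorem Fintype.sum_eq_sum_orderEmbedding_perm {ι M : Type*} [Fintype ι] [LinearOrder ι]
    [AddCommMonoid M] {k : ℕ} (F : (Fin k → ι) → M) (hF : ∀ r, ¬Injective r → F r = 0) :
    ∑ r, F r = ∑ s : Fin k ↪o ι, ∑ σ : Equiv.Perm (Fin k), F (s ∘ σ) := by
  rw [← Fintype.sum_prod_type']
  symm
  refine sum_bij_ne_zero (fun p _ _ => p.1 ∘ p.2) (by simp) ?_ ?_ (fun _ _ _ => rfl)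
  · rintro ⟨s, σ⟩ - - ⟨s', σ'⟩ - - h
    have hs : s = s' := by
      have hrange : Set.range (s ∘ σ) = Set.range (s' ∘ σ') := congrArg Set.range h
      rw [Set.range_comp, Set.range_comp, σ.range_eq_univ, σ'.range_eq_univ,
        Set.image_univ, Set.image_univ] at hrange
      exact DFunLike.coe_injective ((s.strictMono.range_inj s'.strictMono).1 hrange)
    subst hs
    have hσ : σ = σ' := Equiv.ext fun i => s.injective (congrFun h i)
    rw [hσ]
  · intro r _ hr
    have hinj : Injective r := not_not.1 (mt (hF r) hr)
    have hsorted : StrictMono (r ∘ Tuple.sort r) :=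
      (Tuple.monotone_sort r).strictMono_of_injective (hinj.comp (Tuple.sort r).injective)
    refine ⟨(OrderEmbedding.ofStrictMono _ hsorted, (Tuple.sort r)⁻¹), mem_univ _, ?_, ?_⟩
    · simpa [comp_def] using hr
    · ext i
      simp

namespace Matrix

variable {R : Type*} [CommRing R]

theorem det_mul_eq_sum_prod_mul_det_submatrix {m ι : Type*} [Fintype m] [DecidableEq m]
    [Fintype ι] (B : Matrix m ι R) (C : Matrix ι m R) :
    (B * C).det = ∑ r : m → ι, (∏ i, B i (r i)) * (C.submatrix r id).det := by
  have hrows : (B * C : Matrix m m R) = fun i => ∑ j, B i j • C j := by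
    ext i l
    simp [mul_apply, Finset.sum_apply]
  rw [det, hrows]
  refine ((detRowAlternating (R := R) (n := m)).toMultilinearMap.map_sum _).trans ?_
  refine sum_congr rfl fun r _ => ?_
  rw [MultilinearMap.map_smul_univ, smul_eq_mul]
  rfl

variable {ι : Type*} [Fintype ι] [LinearOrder ι] {k : ℕ}

/-- Cauchy–Binet; the `k`-element subsets of `ι` are enumerated as order embeddings
`Fin k ↪o ι`. -/
theorem det_mul_eq_sum_det_submatrix (B : Matrix (Fin k) ι R) (C : Matrix ι (Fin k) R) :
    (B * C).det = ∑ s : Fin k ↪o ι, (B.submatrix id s).det * (C.submatrix s id).det := by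
  rw [det_mul_eq_sum_prod_mul_det_submatrix, Fintype.sum_eq_sum_orderEmbedding_perm]
  · refine sum_congr rfl fun s _ => ?_
    rw [← det_transpose, det_apply', sum_mul]
    refine sum_congr rfl fun σ _ => ?_
    rw [show C.submatrix (s ∘ σ) id = (C.submatrix s id).submatrix σ id from rfl, det_permute]
    change (∏ i, B i (s (σ i))) * _ = (_ * ∏ i, B i (s (σ i))) * _
    ring
  · intro r hr
    obtain ⟨i, j, hrij, hij⟩ := not_injective_iff.1 hr
    rw [det_zero_of_row_eq hij (by ext; simp [hrij]), mul_zero]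

theorem det_mul_pos [PartialOrder R] [IsStrictOrderedRing R]
    {B : Matrix (Fin k) ι R} {C : Matrix ι (Fin k) R}
    (hB : ∀ s : Fin k ↪o ι, 0 ≤ (B.submatrix id s).det)
    (hB₀ : ∃ s : Fin k ↪o ι, (B.submatrix id s).det ≠ 0)
    (hC : ∀ s : Fin k ↪o ι, 0 < (C.submatrix s id).det) : 0 < (B * C).det := by
  rw [det_mul_eq_sum_det_submatrix]
  obtain ⟨s, hs⟩ := hB₀
  exact sum_pos' (fun t _ => mul_nonneg (hB t) (hC t).le)
    ⟨s, mem_univ _, mul_pos ((hB s).lt_of_ne' hs) (hC s)⟩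

theorem det_vandermonde_pos [PartialOrder R] [IsStrictOrderedRing R] {v : Fin k → R}
    (hv : StrictMono v) : 0 < (vandermonde v).det := by
  rw [det_vandermonde]
  exact prod_pos fun i _ => prod_pos fun j hj => sub_pos.2 (hv (mem_Ioi.1 hj))

theorem isUnit_of_rank_eq_card {K m : Type*} [Field K] [Fintype m] [DecidableEq m]
    {M : Matrix m m K} (h : M.rank = Fintype.card m) : IsUnit M := by
  rw [← mulVec_surjective_iff_isUnit, ← coe_mulVecLin, ← LinearMap.range_eq_top]
  apply Submodule.eq_top_of_finrank_eq
  rwa [Module.finrank_fintype_fun_eq_card]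

theorem existsUnique_mulVec_eq {K m : Type*} [Field K] [Fintype m] [DecidableEq m]
    {M : Matrix m m K} (hM : M.det ≠ 0) (b : m → K) : ∃! w, M *ᵥ w = b := by
  have hunit : IsUnit M := (isUnit_iff_isUnit_det M).2 hM.isUnit
  exact Bijective.existsUnique
    ⟨mulVec_injective_iff_isUnit.2 hunit, mulVec_surjective_iff_isUnit.2 hunit⟩ b

/-- By Cauchy–Binet, `det (A * Aᵀ)` would vanish otherwise, while `A * Aᵀ` has rank `k`. -/
theorem exists_det_submatrix_ne_zero_of_rank_eq {K : Type*} [Field K] [LinearOrder K]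
    [IsStrictOrderedRing K] {A : Matrix (Fin k) ι K} (hA : A.rank = k) :
    ∃ s : Fin k ↪o ι, (A.submatrix id s).det ≠ 0 := by
  by_contra! h
  have hunit : IsUnit (A * Aᵀ) :=
    isUnit_of_rank_eq_card (by simp [rank_self_mul_transpose, hA])
  apply ((isUnit_iff_isUnit_det _).1 hunit).ne_zero
  simp [det_mul_eq_sum_det_submatrix, h]

end Matrix

theorem maxMinor_map_orderEmbedding {k n : ℕ} (A : Matrix (Fin k) (Fin n) ℝ)
    (s : Fin k ↪o Fin n) : maxMinor A (univ.map s.toEmbedding) = (A.submatrix id s).det := by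
  have hcard : (univ.map s.toEmbedding).card = k := by simp
  have hs : s = (univ.map s.toEmbedding).orderEmbOfFin hcard :=
    orderEmbOfFin_unique' hcard fun i => mem_map_of_mem _ (mem_univ i)
  rw [maxMinor, dif_pos hcard]
  simp_rw [coe_orderIsoOfFin_apply, ← hs]

noncomputable def wronskianMatrix {k : ℕ} (f : Fin k → ℝ → ℝ) (x : ℝ) :
    Matrix (Fin k) (Fin k) ℝ :=
  of fun i l => iteratedDeriv l (f i) x

section ExponentialSums

theorem iteratedDeriv_exp_mul_add (m : ℕ) (a b : ℝ) :
    iteratedDeriv m (fun y => Real.exp (a * y + b)) = fun y => a ^ m * Real.exp (a * y + b) := by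
  induction m with
  | zero => simp
  | succ m ih =>
    rw [iteratedDeriv_succ, ih]
    ext y
    exact (((((hasDerivAt_id' y).const_mul a).add_const b).exp).const_mul (a ^ m)).deriv.trans
      (by ring)

theorem iteratedDeriv_sum_mul_exp {ι : Type*} [Fintype ι] (a κ c : ι → ℝ) (m : ℕ)
    (x : ℝ) :
    iteratedDeriv m (fun y => ∑ j, a j * Real.exp (κ j * y + c j)) x
      = ∑ j, a j * κ j ^ m * Real.exp (κ j * x + c j) := by
  rw [iteratedDeriv_fun_sum fun j _ => by fun_prop]
  refine sum_congr rfl fun j _ => ?_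
  rw [iteratedDeriv_const_mul _ (by fun_prop), iteratedDeriv_exp_mul_add, mul_assoc]

variable {ι : Type*} {k : ℕ} (κ c : ι → ℝ) (x : ℝ)

noncomputable def expVandermonde : Matrix ι (Fin k) ℝ :=
  of fun j l => Real.exp (κ j * x + c j) * κ j ^ (l : ℕ)

theorem wronskianMatrix_eq_mul_expVandermonde [Fintype ι] {A : Matrix (Fin k) ι ℝ}
    {f : Fin k → ℝ → ℝ} (hf : ∀ i x, f i x = ∑ j, A i j * Real.exp (κ j * x + c j)) :
    wronskianMatrix f x = A * expVandermonde κ c x := by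
  ext i l
  rw [wronskianMatrix, of_apply, funext (hf i), iteratedDeriv_sum_mul_exp, mul_apply]
  refine sum_congr rfl fun j _ => ?_
  rw [expVandermonde, of_apply]
  ring

variable {κ}

theorem det_submatrix_expVandermonde_pos [LinearOrder ι] (hκ : StrictMono κ)
    (s : Fin k ↪o ι) :
    0 < ((expVandermonde κ c x).submatrix s id).det := by
  have hfactor : (expVandermonde κ c x).submatrix s id
      = diagonal (fun i => Real.exp (κ (s i) * x + c (s i))) * vandermonde (κ ∘ s) := by
    ext i l
    simp [expVandermonde, diagonal_mul, vandermonde_apply]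
  rw [hfactor, det_mul, det_diagonal]
  exact mul_pos (prod_pos fun i _ => Real.exp_pos _) (det_vandermonde_pos (hκ.comp s.strictMono))

theorem det_wronskianMatrix_pos [Fintype ι] [LinearOrder ι] (hκ : StrictMono κ)
    {A : Matrix (Fin k) ι ℝ} (hA : ∀ s : Fin k ↪o ι, 0 ≤ (A.submatrix id s).det)
    (hA₀ : ∃ s : Fin k ↪o ι, (A.submatrix id s).det ≠ 0) {f : Fin k → ℝ → ℝ}
    (hf : ∀ i x, f i x = ∑ j, A i j * Real.exp (κ j * x + c j)) :
    0 < (wronskianMatrix f x).det := by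
  rw [wronskianMatrix_eq_mul_expVandermonde κ c x hf]
  exact det_mul_pos hA hA₀ (det_submatrix_expVandermonde_pos c x hκ)

end ExponentialSums

theorem darboux_coefficients_existUnique_general
    (k n : ℕ)
    (κ c : Fin n → ℝ) (hκ : StrictMono κ)
    (A : Matrix (Fin k) (Fin n) ℝ) (hrank : A.rank = k)
    (hTNN : ∀ I : Finset (Fin n), I.card = k → 0 ≤ maxMinor A I)
    (f : Fin k → ℝ → ℝ)
    (hf : ∀ i x, f i x = ∑ j, A i j * Real.exp (κ j * x + c j))
    (x : ℝ) :
    ∃! w : Fin k → ℝ, ∀ i : Fin k,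
      iteratedDeriv k (f i) x =
        ∑ s : Fin k, w s * iteratedDeriv (k - 1 - (s : ℕ)) (f i) x := by
  have hA (s : Fin k ↪o Fin n) : 0 ≤ (A.submatrix id s).det :=
    maxMinor_map_orderEmbedding A s ▸ hTNN _ (by simp)
  have hτ := det_wronskianMatrix_pos c x hκ hA (exists_det_submatrix_ne_zero_of_rank_eq hrank) hf
  have hM : ((wronskianMatrix f x).submatrix id Fin.revPerm).det ≠ 0 := by
    rw [det_permute']
    exact mul_ne_zero (by simp) hτ.ne'
  convert existsUnique_mulVec_eq hM (fun i => iteratedDeriv k (f i) x) using 2 with w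
  simp only [funext_iff, mulVec, dotProduct, submatrix_apply, wronskianMatrix, of_apply, id,
    Fin.revPerm_apply, Fin.val_rev, Nat.sub_sub, Nat.add_comm 1, eq_comm (a := iteratedDeriv k _ x),
    mul_comm (w _)]

/-- for totally nonnegative soliton data of full rank `k`, at every
`x ∈ ℝ` there exist unique Darboux coefficients `w_1(x), …, w_k(x)` (here indexed by
`s : Fin k` corresponding to `w_{s+1}`) such that
`f_i^{(k)}(x) = Σ_{s=1}^k w_s(x) f_i^{(k-s)}(x)` for all `i`. -/
theorem darboux_coefficients_existUnique
    (k n : ℕ) (hk : 1 ≤ k) (hkn : k < n)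
    (κ c : Fin n → ℝ) (hκ : StrictMono κ)
    (A : Matrix (Fin k) (Fin n) ℝ) (hrank : A.rank = k)
    (hTNN : ∀ I : Finset (Fin n), I.card = k → 0 ≤ maxMinor A I)
    (f : Fin k → ℝ → ℝ)
    (hf : ∀ i x, f i x = ∑ j, A i j * Real.exp (κ j * x + c j))
    (x : ℝ) :
    ∃! w : Fin k → ℝ, ∀ i : Fin k,
      iteratedDeriv k (f i) x =
        ∑ s : Fin k, w s * iteratedDeriv (k - 1 - (s : ℕ)) (f i) x :=
  darboux_coefficients_existUnique_general k n κ c hκ A hrank hTNN f hf x
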